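/- arXiv:1507.05082 — 5 statements merged into one kernel-verified Lean document; each statement's English description precedes it below -/
import Mathlib

section
/- Let (γ_i), (μ_i), (τ_i) be sequences of complex numbers converging to limits γ, μ, τ respectively. Suppose τ = 0 and |γ| ≠ |μ|. Then there exist a sequence (e_i) of complex numbers with e_i → 0 and an index i_0 such that for all i ≥ i_0 the equation γ_i e_i − μ_i e_{i−1} = τ_i holds. -/
open Filter Topology

lemma contraction_tendsto_zero {a b : ℕ → ℝ} {r : ℝ} (hr0 : 0 ≤ r) (hr1 : r < 1)
    (ha : ∀ n, 0 ≤ a n) (hb : Tendsto b atTop (𝓝 0)) (N : ℕ)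
    (hrec : ∀ n, N ≤ n → a (n + 1) ≤ r * a n + b (n + 1)) :
    Tendsto a atTop (𝓝 0) := by
  rw [Metric.tendsto_atTop]
  intro ε hε
  have h1r : 0 < 1 - r := by linarith
  have hε2 : 0 < ε * (1 - r) / 4 := by positivity
  obtain ⟨M0, hM0⟩ := Metric.tendsto_atTop.mp hb (ε * (1 - r) / 4) hε2
  set M := max M0 N with hM
  have key : ∀ n, a (M + n) ≤ r ^ n * a M + ε / 4 := by
    intro n
    induction n with
    | zero => simp; nlinarith [ha M]
    | succ n ih =>
        have hrec' := hrec (M + n) (le_trans (le_max_right M0 N) (Nat.le_add_right M n))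
        have hbb : b (M + n + 1) ≤ ε * (1 - r) / 4 := by
          have := hM0 (M + n + 1) (le_trans (le_max_left M0 N) (by omega))
          rw [Real.dist_eq, sub_zero] at this
          exact le_of_lt (lt_of_abs_lt this)
        have : a (M + (n + 1)) ≤ r * a (M + n) + b (M + n + 1) := by
          rw [show M + (n + 1) = M + n + 1 by ring]; exact hrec'
        calc a (M + (n + 1)) ≤ r * (r ^ n * a M + ε / 4) + ε * (1 - r) / 4 := by
              nlinarith [ha (M + n)]
          _ = r ^ (n + 1) * a M + ε / 4 := by ring
  have hpow : Tendsto (fun n => r ^ n * a M) atTop (𝓝 0) := by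
    simpa using (tendsto_pow_atTop_nhds_zero_of_lt_one hr0 hr1).mul_const (a M)
  obtain ⟨K, hK⟩ := Metric.tendsto_atTop.mp hpow (ε / 4) (by positivity)
  refine ⟨M + K, fun i hi => ?_⟩
  have hiM : M ≤ i := by omega
  have := key (i - M)
  rw [Nat.add_sub_cancel' hiM] at this
  have hK' := hK (i - M) (by omega)
  rw [Real.dist_eq, sub_zero] at hK' ⊢
  have : a i ≤ ε / 4 + ε / 4 := le_trans this (by linarith [lt_of_abs_lt hK'])
  rw [abs_of_nonneg (ha i)]; linarith

noncomputable def fwdSeq (γ μ τ : ℕ → ℂ) (i₀ : ℕ) : ℕ → ℂ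
  | 0 => 0
  | n + 1 => if n + 1 < i₀ then 0 else (τ (n + 1) + μ (n + 1) * fwdSeq γ μ τ i₀ n) / γ (n + 1)

lemma case_forward (γ μ τ : ℕ → ℂ) (γ₀ μ₀ : ℂ)
    (hγ : Tendsto γ atTop (𝓝 γ₀)) (hμ : Tendsto μ atTop (𝓝 μ₀))
    (hτ : Tendsto τ atTop (𝓝 0)) (h : ‖μ₀‖ < ‖γ₀‖) :
    ∃ (e : ℕ → ℂ) (i₀ : ℕ), Tendsto e atTop (𝓝 0) ∧
      ∀ i ≥ i₀, γ i * e i - μ i * e (i - 1) = τ i := by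
  set δ : ℝ := (‖γ₀‖ - ‖μ₀‖) / 3 with hδ
  have hδ0 : 0 < δ := by rw [hδ]; linarith
  set g : ℝ := ‖γ₀‖ - δ with hg
  set m : ℝ := ‖μ₀‖ + δ with hm
  have hg0 : 0 < g := by
    have := norm_nonneg μ₀
    rw [hg, hδ]; linarith
  have hm0 : 0 ≤ m := by positivity
  have hmg : m < g := by rw [hm, hg, hδ]; linarith
  have hEγ : ∀ᶠ i in atTop, g ≤ ‖γ i‖ :=
    hγ.norm.eventually (eventually_ge_nhds (by rw [hg]; linarith))
  have hEμ : ∀ᶠ i in atTop, ‖μ i‖ ≤ m :=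
    hμ.norm.eventually (eventually_le_nhds (by rw [hm]; linarith))
  obtain ⟨N, hN⟩ := eventually_atTop.mp (hEγ.and hEμ)
  set i₀ := max N 1 with hi₀
  have hi₀1 : 1 ≤ i₀ := le_max_right N 1
  have hbd : ∀ i, i₀ ≤ i → g ≤ ‖γ i‖ ∧ ‖μ i‖ ≤ m := fun i hi => hN i (le_trans (le_max_left N 1) hi)
  have hγne : ∀ i, i₀ ≤ i → γ i ≠ 0 := by
    intro i hi h0
    have := (hbd i hi).1
    rw [h0, norm_zero] at this; linarith
  set e := fwdSeq γ μ τ i₀ with he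
  have heq : ∀ n, ¬(n + 1 < i₀) → e (n + 1) = (τ (n + 1) + μ (n + 1) * e n) / γ (n + 1) := by
    intro n hn; rw [he]; simp [fwdSeq, hn]
  refine ⟨e, i₀, ?_, ?_⟩
  · rw [tendsto_zero_iff_norm_tendsto_zero]
    have hb : Tendsto (fun n => ‖τ n‖ / g) atTop (𝓝 0) := by
      simpa using (hτ.norm.div_const g)
    refine contraction_tendsto_zero (r := m / g) (by positivity)
      ((div_lt_one hg0).mpr hmg) (fun n => norm_nonneg _) hb i₀ ?_
    intro n hn
    have hn1 : ¬(n + 1 < i₀) := by omega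
    rw [heq n hn1, norm_div]
    have hb1 : g ≤ ‖γ (n + 1)‖ := (hbd (n + 1) (by omega)).1
    have hb2 : ‖μ (n + 1)‖ ≤ m := (hbd (n + 1) (by omega)).2
    have step1 : ‖τ (n + 1) + μ (n + 1) * e n‖ ≤ ‖τ (n + 1)‖ + m * ‖e n‖ := by
      calc ‖τ (n + 1) + μ (n + 1) * e n‖ ≤ ‖τ (n + 1)‖ + ‖μ (n + 1) * e n‖ := norm_add_le _ _
        _ ≤ ‖τ (n + 1)‖ + m * ‖e n‖ := by
            rw [norm_mul]; have := norm_nonneg (e n); nlinarith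
    calc ‖τ (n + 1) + μ (n + 1) * e n‖ / ‖γ (n + 1)‖
        ≤ (‖τ (n + 1)‖ + m * ‖e n‖) / g := by
          apply div_le_div₀ (by positivity) step1 hg0 hb1
      _ = m / g * ‖e n‖ + ‖τ (n + 1)‖ / g := by ring
  · intro i hi
    obtain ⟨n, rfl⟩ : ∃ n, i = n + 1 := ⟨i - 1, by omega⟩
    rw [heq n (by omega)]
    rw [mul_div_cancel₀ _ (hγne (n + 1) hi)]
    simp

lemma case_series (γ μ τ : ℕ → ℂ) (γ₀ μ₀ : ℂ)
    (hγ : Tendsto γ atTop (𝓝 γ₀)) (hμ : Tendsto μ atTop (𝓝 μ₀))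
    (hτ : Tendsto τ atTop (𝓝 0)) (h : ‖γ₀‖ < ‖μ₀‖) :
    ∃ (e : ℕ → ℂ) (i₀ : ℕ), Tendsto e atTop (𝓝 0) ∧
      ∀ i ≥ i₀, γ i * e i - μ i * e (i - 1) = τ i := by
  set δ : ℝ := (‖μ₀‖ - ‖γ₀‖) / 3 with hδ
  have hδ0 : 0 < δ := by rw [hδ]; linarith
  set gm : ℝ := ‖γ₀‖ + δ with hgm
  set mm : ℝ := ‖μ₀‖ - δ with hmm
  have hmm0 : 0 < mm := by
    have := norm_nonneg γ₀
    rw [hmm, hδ]; linarith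
  have hgm0 : 0 ≤ gm := by positivity
  have hr1 : gm / mm < 1 := (div_lt_one hmm0).mpr (by rw [hgm, hmm, hδ]; linarith)
  set r : ℝ := gm / mm with hr
  have hr0 : 0 ≤ r := by positivity
  have hlt1 : ‖γ₀‖ < gm := by rw [hgm]; linarith
  have hlt2 : mm < ‖μ₀‖ := by rw [hmm]; linarith
  obtain ⟨N, hN⟩ := eventually_atTop.mp
    ((hγ.norm.eventually (eventually_le_nhds hlt1)).and
     (hμ.norm.eventually (eventually_ge_nhds hlt2)))
  set i₀ := N with hi₀
  have hbd : ∀ j, i₀ ≤ j → ‖γ j‖ ≤ gm ∧ mm ≤ ‖μ j‖ := fun j hj => hN j hj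
  have hμne : ∀ j, i₀ ≤ j → μ j ≠ 0 := by
    intro j hj h0
    have := (hbd j hj).2
    rw [h0, norm_zero] at this; linarith
  obtain ⟨T, hT⟩ : ∃ T, ∀ k, ‖τ k‖ ≤ T := by
    obtain ⟨T, hT⟩ := hτ.norm.bddAbove_range
    exact ⟨T, fun k => hT ⟨k, rfl⟩⟩
  have hT0 : 0 ≤ T := le_trans (norm_nonneg _) (hT 0)
  set c : ℕ → ℕ → ℂ := fun i n =>
    τ (i + n + 1) * (∏ j ∈ Finset.range n, γ (i + j + 1)) /
      ∏ j ∈ Finset.range (n + 1), μ (i + j + 1) with hc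
  have hcbound : ∀ i, i₀ ≤ i → ∀ n, ‖c i n‖ ≤ ‖τ (i + n + 1)‖ / mm * r ^ n := by
    intro i hi n
    have h1 : ∏ j ∈ Finset.range n, ‖γ (i + j + 1)‖ ≤ gm ^ n := by
      calc ∏ j ∈ Finset.range n, ‖γ (i + j + 1)‖
          ≤ ∏ _j ∈ Finset.range n, gm := Finset.prod_le_prod
            (fun j _ => norm_nonneg _) (fun j _ => (hbd (i + j + 1) (by omega)).1)
        _ = gm ^ n := by simp
    have h2 : mm ^ (n + 1) ≤ ∏ j ∈ Finset.range (n + 1), ‖μ (i + j + 1)‖ := by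
      calc mm ^ (n + 1) = ∏ _j ∈ Finset.range (n + 1), mm := by simp
        _ ≤ _ := Finset.prod_le_prod (fun j _ => le_of_lt hmm0)
            (fun j _ => (hbd (i + j + 1) (by omega)).2)
    have hpos : (0:ℝ) < mm ^ (n + 1) := by positivity
    have e1 : ‖c i n‖ = ‖τ (i + n + 1)‖ * (∏ j ∈ Finset.range n, ‖γ (i + j + 1)‖) /
        ∏ j ∈ Finset.range (n + 1), ‖μ (i + j + 1)‖ := by
      rw [hc]; simp [norm_div, norm_mul, norm_prod]
    rw [e1]
    refine le_trans (div_le_div₀ (by positivity)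
      (mul_le_mul_of_nonneg_left h1 (norm_nonneg _)) hpos h2) (le_of_eq ?_)
    rw [hr, div_pow, pow_succ]
    have hmne : mm ≠ 0 := ne_of_gt hmm0
    have hmne' : mm ^ n ≠ 0 := pow_ne_zero _ hmne
    field_simp
  have hsum : ∀ i, i₀ ≤ i → Summable (fun n => c i n) := by
    intro i hi
    apply Summable.of_norm_bounded
      ((summable_geometric_of_lt_one hr0 hr1).mul_left (T / mm))
    intro n
    refine le_trans (hcbound i hi n) ?_
    have : ‖τ (i + n + 1)‖ ≤ T := hT _
    have hrn : (0:ℝ) ≤ r ^ n := pow_nonneg hr0 n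
    apply mul_le_mul_of_nonneg_right _ hrn
    exact div_le_div_of_nonneg_right this hmm0.le
  set e : ℕ → ℂ := fun i => -∑' n, c i n with he
  -- key shift identity
  have hshift : ∀ i, i₀ ≤ i → ∀ n, μ (i + 1) * c i (n + 1) = γ (i + 1) * c (i + 1) n := by
    intro i hi n
    have hμ1 : μ (i + 1) ≠ 0 := hμne (i + 1) (by omega)
    have hPμ : ∀ k, (∏ j ∈ Finset.range k, μ (i + 1 + j + 1)) ≠ 0 :=
      fun k => Finset.prod_ne_zero_iff.mpr (fun j _ => hμne (i + 1 + j + 1) (by omega))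
    rw [hc]
    simp only
    rw [Finset.prod_range_succ' (fun j => γ (i + j + 1)) n,
        Finset.prod_range_succ' (fun j => μ (i + j + 1)) (n + 1)]
    have eγ : (∏ j ∈ Finset.range n, γ (i + (j + 1) + 1)) =
        ∏ j ∈ Finset.range n, γ (i + 1 + j + 1) :=
      Finset.prod_congr rfl (fun j _ => congrArg γ (by omega))
    have eμ : (∏ j ∈ Finset.range (n + 1), μ (i + (j + 1) + 1)) =
        ∏ j ∈ Finset.range (n + 1), μ (i + 1 + j + 1) :=
      Finset.prod_congr rfl (fun j _ => congrArg μ (by omega))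
    rw [eγ, eμ]
    have eτ : i + (n + 1) + 1 = i + 1 + n + 1 := by omega
    rw [eτ]
    have hP := hPμ (n + 1)
    field_simp
  have hc0 : ∀ i, i₀ ≤ i → μ (i + 1) * c i 0 = τ (i + 1) := by
    intro i hi
    have hμ1 : μ (i + 1) ≠ 0 := hμne (i + 1) (by omega)
    rw [hc]
    simp only [Finset.range_zero, Finset.prod_empty, mul_one, Finset.range_one,
      Finset.prod_singleton, zero_add, add_zero]
    field_simp
  have he' : ∀ j, e j = -∑' n, c j n := fun j => by rw [he]
  have h1r : 0 < 1 - r := by linarith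
  have hnormsum : ∀ i, i₀ ≤ i → Summable (fun n => ‖c i n‖) := by
    intro i hi
    apply Summable.of_nonneg_of_le (fun n => norm_nonneg _) (fun n => ?_)
      ((summable_geometric_of_lt_one hr0 hr1).mul_left (T / mm))
    refine le_trans (hcbound i hi n) ?_
    exact mul_le_mul_of_nonneg_right
      (div_le_div_of_nonneg_right (hT _) hmm0.le) (pow_nonneg hr0 n)
  have hrec : ∀ i, i₀ ≤ i → γ (i + 1) * e (i + 1) - μ (i + 1) * e i = τ (i + 1) := by
    intro i hi
    have hs : Summable (fun n => c i n) := hsum i hi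
    have hs1 : Summable (fun n => c (i + 1) n) := hsum (i + 1) (by omega)
    have key : ∑' n, μ (i + 1) * c i n = τ (i + 1) + γ (i + 1) * ∑' n, c (i + 1) n := by
      rw [Summable.tsum_eq_zero_add (hs.mul_left (μ (i + 1)))]
      congr 1
      · exact hc0 i hi
      · calc (∑' n, μ (i + 1) * c i (n + 1)) = ∑' n, γ (i + 1) * c (i + 1) n :=
              tsum_congr (fun n => hshift i hi n)
          _ = γ (i + 1) * ∑' n, c (i + 1) n := tsum_mul_left
    have hμe : μ (i + 1) * e i = -(τ (i + 1) + γ (i + 1) * ∑' n, c (i + 1) n) := by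
      rw [he' i, mul_neg, ← tsum_mul_left, key]
    rw [hμe, he' (i + 1)]
    ring
  have htend : Tendsto e atTop (𝓝 0) := by
    rw [tendsto_zero_iff_norm_tendsto_zero, Metric.tendsto_atTop]
    intro ε hε
    set ε' : ℝ := ε * mm * (1 - r) / 2 with hε'def
    have hε'0 : 0 < ε' := by positivity
    obtain ⟨M, hM⟩ := eventually_atTop.mp (hτ.norm.eventually (eventually_le_nhds (by rw [norm_zero]; exact hε'0)))
    refine ⟨max M i₀, fun i hi => ?_⟩
    have hiM : M ≤ i := le_trans (le_max_left _ _) hi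
    have hii : i₀ ≤ i := le_trans (le_max_right _ _) hi
    have hgeo : Summable (fun n : ℕ => ε' / mm * r ^ n) :=
      (summable_geometric_of_lt_one hr0 hr1).mul_left _
    have hb : ‖e i‖ ≤ ε / 2 := by
      rw [he' i, norm_neg]
      calc ‖∑' n, c i n‖ ≤ ∑' n, ‖c i n‖ := norm_tsum_le_tsum_norm (hnormsum i hii)
        _ ≤ ∑' n, ε' / mm * r ^ n := by
            refine Summable.tsum_le_tsum (fun n => ?_) (hnormsum i hii) hgeo
            refine le_trans (hcbound i hii n) ?_
            exact mul_le_mul_of_nonneg_right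
              (div_le_div_of_nonneg_right (hM (i + n + 1) (by omega)) hmm0.le)
              (pow_nonneg hr0 n)
        _ = ε' / mm * (1 - r)⁻¹ := by
            rw [tsum_mul_left, tsum_geometric_of_lt_one hr0 hr1]
        _ = ε / 2 := by
            rw [hε'def]
            have h1 : mm ≠ 0 := ne_of_gt hmm0
            have h2 : (1 - r) ≠ 0 := ne_of_gt h1r
            field_simp
    rw [Real.dist_eq, sub_zero, abs_of_nonneg (norm_nonneg _)]
    linarith
  refine ⟨e, i₀ + 1, htend, ?_⟩
  intro i hi
  obtain ⟨k, rfl⟩ : ∃ k, i = k + 1 := ⟨i - 1, by omega⟩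
  simpa using hrec k (by omega)

/-- Lemma 4.11: given complex sequences `γ, μ, τ` with limits `γ₀, μ₀, τ₀ = 0` and
`|γ₀| ≠ |μ₀|`, there is a sequence `e i → 0` solving `γ i * e i - μ i * e (i-1) = τ i`
for all sufficiently large `i`. -/
theorem recursion_lemma (γ μ τ : ℕ → ℂ) (γ₀ μ₀ τ₀ : ℂ)
    (hγ : Tendsto γ atTop (𝓝 γ₀)) (hμ : Tendsto μ atTop (𝓝 μ₀))
    (hτ : Tendsto τ atTop (𝓝 τ₀)) (hτ0 : τ₀ = 0)
    (hne : ‖γ₀‖ ≠ ‖μ₀‖) :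
    ∃ (e : ℕ → ℂ) (i₀ : ℕ), Tendsto e atTop (𝓝 0) ∧
      ∀ i ≥ i₀, γ i * e i - μ i * e (i - 1) = τ i := by
  rw [hτ0] at hτ
  have hne' : ‖γ₀‖ ≠ ‖μ₀‖ := by simpa using hne
  rcases hne'.lt_or_gt with h | h
  · exact case_series γ μ τ γ₀ μ₀ hγ hμ hτ h
  · exact case_forward γ μ τ γ₀ μ₀ hγ hμ hτ h
end

section
/- Let (γ_i)_{i≥1}, (μ_i)_{i≥1}, (τ_i)_{i≥1} be sequences of complex numbers, and let δ > 0 and c > 0 be constants such that |γ_i| ≥ c and |γ_i| ≥ (1+δ)|μ_i| for all i ≥ 1, and τ_i → 0. Define e_0 = 0 and recursively e_i = (μ_i e_{i−1} + τ_i)/γ_i for i ≥ 1. Then for all i ≥ 1 one has |e_i| ≤ Σ_{j=1}^{i} (1+δ)^{j−i} |γ_j|^{−1} |τ_j|, and consequently e_i → 0. -/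
open Filter Topology

lemma geom_sum_bound_aux {r : ℝ} (hr0 : 0 ≤ r) (hr1 : r < 1) (i : ℕ) :
    ∑ j ∈ Finset.Icc 1 i, r ^ (i - j) ≤ (1 - r)⁻¹ := by
  have h1 : ∑ j ∈ Finset.Icc 1 i, r ^ (i - j) = ∑ k ∈ Finset.range i, r ^ k := by
    rw [← Finset.Ico_add_one_right_eq_Icc, Finset.sum_Ico_eq_sum_range]
    have := Finset.sum_range_reflect (fun k => r ^ k) i
    rw [← this]
    apply Finset.sum_congr rfl
    intro k hk
    congr 1
    omega
  rw [h1]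
  calc ∑ k ∈ Finset.range i, r ^ k ≤ ∑' k : ℕ, r ^ k :=
        Summable.sum_le_tsum _ (fun k _ => by positivity) (summable_geometric_of_lt_one hr0 hr1)
    _ = (1 - r)⁻¹ := tsum_geometric_of_lt_one hr0 hr1

lemma geom_conv_tendsto {r : ℝ} (hr0 : 0 ≤ r) (hr1 : r < 1) {a : ℕ → ℝ}
    (ha0 : ∀ j, 0 ≤ a j) (ha : Tendsto a atTop (𝓝 0)) :
    Tendsto (fun i => ∑ j ∈ Finset.Icc 1 i, r ^ (i - j) * a j) atTop (𝓝 0) := by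
  have h1r : 0 < 1 - r := by linarith
  rw [Metric.tendsto_atTop]
  intro ε hε
  set ε' := ε * (1 - r) / 2 with hε'def
  have hε' : 0 < ε' := by positivity
  obtain ⟨N₀, hN₀⟩ := Metric.tendsto_atTop.mp ha ε' hε'
  set N := N₀ + 1 with hNdef
  have hN : ∀ j ≥ N, a j < ε' := by
    intro j hj
    have := hN₀ j (by omega)
    rw [Real.dist_eq, sub_zero, abs_of_nonneg (ha0 j)] at this
    exact this
  set B := ∑ j ∈ Finset.Icc 1 N, a j with hBdef
  have hB0 : 0 ≤ B := Finset.sum_nonneg fun j _ => ha0 j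
  have htB : Tendsto (fun k : ℕ => r ^ k * B) atTop (𝓝 0) := by
    simpa using (tendsto_pow_atTop_nhds_zero_of_lt_one hr0 hr1).mul_const B
  obtain ⟨M, hM⟩ := Metric.tendsto_atTop.mp htB (ε / 2) (by linarith)
  refine ⟨N + M, fun i hi => ?_⟩
  have hNi : N ≤ i := by omega
  have hsplit : Finset.Icc 1 N ∪ Finset.Ioc N i = Finset.Icc 1 i := by
    ext x
    simp only [Finset.mem_union, Finset.mem_Icc, Finset.mem_Ioc]
    omega
  have hdisj : Disjoint (Finset.Icc 1 N) (Finset.Ioc N i) := by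
    rw [Finset.disjoint_left]
    intro x hx hx'
    simp only [Finset.mem_Icc, Finset.mem_Ioc] at hx hx'
    omega
  have hS : ∑ j ∈ Finset.Icc 1 i, r ^ (i - j) * a j =
      (∑ j ∈ Finset.Icc 1 N, r ^ (i - j) * a j) +
      (∑ j ∈ Finset.Ioc N i, r ^ (i - j) * a j) := by
    rw [← hsplit, Finset.sum_union hdisj]
  -- first part
  have hfirst : ∑ j ∈ Finset.Icc 1 N, r ^ (i - j) * a j ≤ r ^ (i - N) * B := by
    rw [hBdef, Finset.mul_sum]
    apply Finset.sum_le_sum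
    intro j hj
    simp only [Finset.mem_Icc] at hj
    have hpow : r ^ (i - j) ≤ r ^ (i - N) :=
      pow_le_pow_of_le_one hr0 hr1.le (by omega)
    exact mul_le_mul_of_nonneg_right hpow (ha0 j)
  have hfirst2 : r ^ (i - N) * B < ε / 2 := by
    have := hM (i - N) (by omega)
    rw [Real.dist_eq, sub_zero] at this
    calc r ^ (i - N) * B ≤ |r ^ (i - N) * B| := le_abs_self _
      _ < ε / 2 := this
  -- second part
  have hsecond : ∑ j ∈ Finset.Ioc N i, r ^ (i - j) * a j ≤ ε' * (1 - r)⁻¹ := by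
    calc ∑ j ∈ Finset.Ioc N i, r ^ (i - j) * a j
        ≤ ∑ j ∈ Finset.Ioc N i, r ^ (i - j) * ε' := by
          apply Finset.sum_le_sum
          intro j hj
          simp only [Finset.mem_Ioc] at hj
          exact mul_le_mul_of_nonneg_left (hN j (by omega)).le (by positivity)
      _ ≤ ∑ j ∈ Finset.Icc 1 i, r ^ (i - j) * ε' := by
          apply Finset.sum_le_sum_of_subset_of_nonneg
          · intro x hx
            simp only [Finset.mem_Ioc] at hx
            simp only [Finset.mem_Icc]
            omega
          · intro j _ _; positivity
      _ = (∑ j ∈ Finset.Icc 1 i, r ^ (i - j)) * ε' := by rw [Finset.sum_mul]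
      _ ≤ (1 - r)⁻¹ * ε' :=
          mul_le_mul_of_nonneg_right (geom_sum_bound_aux hr0 hr1 i) hε'.le
      _ = ε' * (1 - r)⁻¹ := mul_comm _ _
  have hε'bound : ε' * (1 - r)⁻¹ = ε / 2 := by
    rw [hε'def]; field_simp
  have hnonneg : 0 ≤ ∑ j ∈ Finset.Icc 1 i, r ^ (i - j) * a j :=
    Finset.sum_nonneg fun j _ => mul_nonneg (by positivity) (ha0 j)
  rw [Real.dist_eq, sub_zero, abs_of_nonneg hnonneg, hS]
  calc (∑ j ∈ Finset.Icc 1 N, r ^ (i - j) * a j) +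
      (∑ j ∈ Finset.Ioc N i, r ^ (i - j) * a j)
      < ε / 2 + ε / 2 := by
        apply add_lt_add_of_lt_of_le (lt_of_le_of_lt hfirst hfirst2)
        rw [← hε'bound]; exact hsecond
    _ = ε := by ring

/-- Case I in the proof of Lemma 4.11: if `|γ i| ≥ c > 0` and `|γ i| ≥ (1+δ)|μ i|`
for all `i ≥ 1`, `τ i → 0`, and `e` is defined by `e 0 = 0` and the recursion
`e i = (μ i * e (i-1) + τ i) / γ i`, then
`|e i| ≤ ∑_{j=1}^{i} (1+δ)^{j-i} |γ j|⁻¹ |τ j|`, and consequently `e i → 0`. -/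
theorem recursion_caseI (γ μ τ : ℕ → ℂ) (δ c : ℝ) (hδ : 0 < δ) (hc : 0 < c)
    (hγc : ∀ i ≥ 1, c ≤ ‖γ i‖)
    (hγμ : ∀ i ≥ 1, (1 + δ) * ‖μ i‖ ≤ ‖γ i‖)
    (hτ : Tendsto τ atTop (𝓝 0))
    (e : ℕ → ℂ) (he0 : e 0 = 0)
    (herec : ∀ i ≥ 1, e i = (μ i * e (i - 1) + τ i) / γ i) :
    (∀ i ≥ 1, ‖e i‖ ≤
        ∑ j ∈ Finset.Icc 1 i,
          (1 + δ) ^ ((j : ℤ) - (i : ℤ)) * (‖γ j‖)⁻¹ * ‖τ j‖) ∧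
      Tendsto e atTop (𝓝 0) := by
  have hδ1 : (0:ℝ) < 1 + δ := by linarith
  have hδ1' : (1:ℝ) + δ ≠ 0 := ne_of_gt hδ1
  set S : ℕ → ℝ := fun i => ∑ j ∈ Finset.Icc 1 i,
      (1 + δ) ^ ((j : ℤ) - (i : ℤ)) * (‖γ j‖)⁻¹ * ‖τ j‖ with hSdef
  have hγpos : ∀ i ≥ 1, (0:ℝ) < ‖γ i‖ := fun i hi => lt_of_lt_of_le hc (hγc i hi)
  have hSnonneg : ∀ i, 0 ≤ S i := by
    intro i
    apply Finset.sum_nonneg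
    intro j _
    have : (0:ℝ) < (1 + δ) ^ ((j : ℤ) - (i : ℤ)) := zpow_pos hδ1 _
    positivity
  have key : ∀ i ≥ 1, ‖e i‖ ≤ S i := by
    intro i hi
    induction i with
    | zero => omega
    | succ n ih =>
      rcases Nat.eq_or_lt_of_le hi with h1 | h1
      · -- base case: n + 1 = 1
        have hn : n = 0 := by omega
        subst hn
        have he1 : e 1 = τ 1 / γ 1 := by
          rw [herec 1 le_rfl]; simp [he0]
        have hS1 : S 1 = (‖γ 1‖)⁻¹ * ‖τ 1‖ := by
          simp only [hSdef, Finset.Icc_self, Finset.sum_singleton, Nat.cast_one, sub_self,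
            zpow_zero, one_mul]
        show ‖e 1‖ ≤ S 1
        rw [hS1, he1, norm_div, div_eq_inv_mul]
      · -- inductive step: n ≥ 1
        have hn1 : 1 ≤ n := by omega
        have ihn := ih hn1
        have hg := hγpos (n+1) (by omega)
        have hgne : ‖γ (n+1)‖ ≠ 0 := ne_of_gt hg
        have hrec := herec (n+1) (by omega)
        simp only [Nat.add_sub_cancel] at hrec
        have hstep : ‖e (n+1)‖ ≤
            (1 + δ)⁻¹ * S n + (‖γ (n+1)‖)⁻¹ * ‖τ (n+1)‖ := by
          rw [hrec, norm_div]
          have habs : ‖μ (n+1) * e n + τ (n+1)‖ ≤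
              ‖μ (n+1)‖ * ‖e n‖ + ‖τ (n+1)‖ := by
            calc ‖μ (n+1) * e n + τ (n+1)‖
                ≤ ‖μ (n+1) * e n‖ + ‖τ (n+1)‖ := norm_add_le _ _
              _ = ‖μ (n+1)‖ * ‖e n‖ + ‖τ (n+1)‖ := by
                  rw [norm_mul]
          have hμ : ‖μ (n+1)‖ ≤ (1 + δ)⁻¹ * ‖γ (n+1)‖ := by
            have := hγμ (n+1) (by omega)
            rw [inv_mul_eq_div, le_div_iff₀ hδ1]
            linarith [this]
          calc ‖μ (n+1) * e n + τ (n+1)‖ / ‖γ (n+1)‖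
              ≤ (‖μ (n+1)‖ * ‖e n‖ + ‖τ (n+1)‖) /
                  ‖γ (n+1)‖ := by gcongr
            _ ≤ ((1 + δ)⁻¹ * ‖γ (n+1)‖ * S n + ‖τ (n+1)‖) /
                  ‖γ (n+1)‖ := by
                have hmul : ‖μ (n+1)‖ * ‖e n‖
                    ≤ (1 + δ)⁻¹ * ‖γ (n+1)‖ * S n :=
                  mul_le_mul hμ ihn (norm_nonneg _) (by positivity)
                gcongr
            _ = (1 + δ)⁻¹ * S n + (‖γ (n+1)‖)⁻¹ * ‖τ (n+1)‖ := by
                field_simp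
        have hSrec : S (n+1) =
            (1 + δ)⁻¹ * S n + (‖γ (n+1)‖)⁻¹ * ‖τ (n+1)‖ := by
          simp only [hSdef]
          rw [Finset.sum_Icc_succ_top (by omega : 1 ≤ n + 1)]
          have htop : ((1:ℝ) + δ) ^ (((n+1 : ℕ) : ℤ) - ((n+1 : ℕ) : ℤ)) = 1 := by
            rw [sub_self, zpow_zero]
          rw [htop, one_mul, Finset.mul_sum]
          congr 1
          apply Finset.sum_congr rfl
          intro j hj
          have : ((j:ℤ) - ((n+1:ℕ):ℤ)) = ((j:ℤ) - (n:ℤ)) - 1 := by push_cast; ring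
          rw [this, zpow_sub_one₀ hδ1']
          ring
        rw [hSrec]
        exact hstep
  refine ⟨key, ?_⟩
  -- now the limit
  have hτabs : Tendsto (fun j => ‖τ j‖) atTop (𝓝 0) := by
    have := hτ.norm
    simpa using this
  set a : ℕ → ℝ := fun j => (‖γ j‖)⁻¹ * ‖τ j‖ with hadef
  have ha0 : ∀ j, 0 ≤ a j := fun j => by positivity
  have ha : Tendsto a atTop (𝓝 0) := by
    apply squeeze_zero' (Eventually.of_forall ha0)
    · filter_upwards [eventually_ge_atTop 1] with j hj
      have hγj := hγc j hj
      have : (‖γ j‖)⁻¹ ≤ c⁻¹ := by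
        apply inv_anti₀ hc hγj
      calc a j ≤ c⁻¹ * ‖τ j‖ :=
          mul_le_mul_of_nonneg_right this (norm_nonneg _)
        _ = c⁻¹ * ‖τ j‖ := rfl
    · simpa using hτabs.const_mul c⁻¹
  set r : ℝ := (1 + δ)⁻¹ with hrdef
  have hr0 : 0 ≤ r := by positivity
  have hr1 : r < 1 := by
    rw [hrdef, inv_lt_one_iff₀]
    right; linarith
  have hSeq : ∀ i, S i = ∑ j ∈ Finset.Icc 1 i, r ^ (i - j) * a j := by
    intro i
    simp only [hSdef]
    apply Finset.sum_congr rfl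
    intro j hj
    simp only [Finset.mem_Icc] at hj
    have hji : j ≤ i := hj.2
    have hexp : ((j:ℤ) - (i:ℤ)) = -((i - j : ℕ) : ℤ) := by
      push_cast [hji]; ring
    rw [hexp, zpow_neg, zpow_natCast, hrdef, hadef]
    rw [← inv_pow]
    ring
  have hStendsto : Tendsto S atTop (𝓝 0) := by
    have := geom_conv_tendsto hr0 hr1 ha0 ha
    simpa only [← hSeq] using this
  rw [tendsto_zero_iff_norm_tendsto_zero]
  apply squeeze_zero' (Eventually.of_forall fun i => norm_nonneg _)
    (g := S)
  · filter_upwards [eventually_ge_atTop 1] with i hi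
    exact key i hi
  · exact hStendsto
end

section
/- Let (γ_i), (μ_i), (τ_i) be sequences of complex numbers converging to limits γ, μ, τ respectively, with τ = 0, μ ≠ 0 and |γ| < |μ|. Then there exists an index i_0 such that for every i ≥ i_0 the series e_i := −Σ_{k=1}^{∞} (Π_{j=1}^{k−1} (γ_{i+j}/μ_{i+j})) · μ_{i+k}^{−1} τ_{i+k} converges absolutely; moreover e_i → 0 as i → ∞, and γ_i e_i − μ_i e_{i−1} = τ_i for all i > i_0. -/
set_option maxHeartbeats 1000000


open Filter Topology

private lemma prod_Icc_one_eq_range {M : Type*} [CommMonoid M] (f : ℕ → M) (n : ℕ) :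
    ∏ j ∈ Finset.Icc 1 n, f j = ∏ j ∈ Finset.range n, f (j + 1) := by
  induction n with
  | zero => simp
  | succ n ih =>
    rw [Finset.prod_range_succ, ← ih, Finset.prod_Icc_succ_top (by omega)]

/-- Case II in the proof of Lemma 4.11: if `γ i → γ₀`, `μ i → μ₀ ≠ 0`, `τ i → 0` and
`|γ₀| < |μ₀|`, then for some `i₀` and all `i ≥ i₀` the series
`e i = -∑_{k=1}^{∞} (∏_{j=1}^{k-1} γ(i+j)/μ(i+j)) μ(i+k)⁻¹ τ(i+k)` converges absolutely,
`e i → 0`, and `γ i * e i - μ i * e (i-1) = τ i` for all `i > i₀`. -/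
theorem recursion_caseII (γ μ τ : ℕ → ℂ) (γ₀ μ₀ : ℂ)
    (hγ : Tendsto γ atTop (𝓝 γ₀)) (hμ : Tendsto μ atTop (𝓝 μ₀))
    (hτ : Tendsto τ atTop (𝓝 0)) (hμ0 : μ₀ ≠ 0)
    (hlt : ‖γ₀‖ < ‖μ₀‖) :
    ∃ i₀ : ℕ,
      let term : ℕ → ℕ → ℂ := fun i k =>
        (∏ j ∈ Finset.Icc 1 (k - 1), γ (i + j) / μ (i + j)) * (μ (i + k))⁻¹ * τ (i + k)
      let e : ℕ → ℂ := fun i => -∑' k : ℕ, term i (k + 1)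
      (∀ i ≥ i₀, Summable fun k : ℕ => ‖term i (k + 1)‖) ∧
        Tendsto e atTop (𝓝 0) ∧
        ∀ i > i₀, γ i * e i - μ i * e (i - 1) = τ i := by
  have habsγ : Tendsto (fun n => ‖γ n‖) atTop (𝓝 (‖γ₀‖)) :=
    (continuous_norm.tendsto _).comp hγ
  have habsμ : Tendsto (fun n => ‖μ n‖) atTop (𝓝 (‖μ₀‖)) :=
    (continuous_norm.tendsto _).comp hμ
  have habsτ : Tendsto (fun n => ‖τ n‖) atTop (𝓝 0) := by
    have := hτ.norm; rwa [norm_zero] at this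
  have h0γ : (0 : ℝ) ≤ ‖γ₀‖ := norm_nonneg _
  obtain ⟨a, b, hA, hab, hb0, hbB⟩ :
      ∃ a b : ℝ, ‖γ₀‖ < a ∧ a < b ∧ (0 : ℝ) < b ∧ b < ‖μ₀‖ :=
    ⟨(‖γ₀‖ + ‖μ₀‖) / 2,
     ((‖γ₀‖ + ‖μ₀‖) / 2 + ‖μ₀‖) / 2,
     by linarith, by linarith, by linarith, by linarith⟩
  obtain ⟨r, hr0, hr1, hrdef⟩ : ∃ r : ℝ, 0 ≤ r ∧ r < 1 ∧ r = a / b :=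
    ⟨a / b, div_nonneg (by linarith) hb0.le, (div_lt_one hb0).2 hab, rfl⟩
  -- pick i₀ with eventual bounds
  have hev : ∀ᶠ n in atTop,
      ‖γ n‖ ≤ a ∧ b ≤ ‖μ n‖ ∧ ‖τ n‖ ≤ 1 := by
    filter_upwards [habsγ.eventually_lt_const hA, habsμ.eventually_const_lt hbB,
      habsτ.eventually_lt_const one_pos] with n h1 h2 h3
    exact ⟨h1.le, h2.le, h3.le⟩
  obtain ⟨i₀, hi₀⟩ := eventually_atTop.mp hev
  -- key pointwise bound
  have key : ∀ T : ℝ, ∀ i, i₀ ≤ i → (∀ n, i < n → ‖τ n‖ ≤ T) → ∀ k : ℕ,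
      ‖(∏ j ∈ Finset.Icc 1 k, γ (i + j) / μ (i + j)) *
        (μ (i + (k + 1)))⁻¹ * τ (i + (k + 1))‖ ≤ r ^ k * (b⁻¹ * T) := by
    intro T i hi hT k
    have hprod : ∏ j ∈ Finset.Icc 1 k, ‖γ (i + j) / μ (i + j)‖ ≤ r ^ k := by
      calc ∏ j ∈ Finset.Icc 1 k, ‖γ (i + j) / μ (i + j)‖
          ≤ ∏ _j ∈ Finset.Icc 1 k, r := by
            apply Finset.prod_le_prod
            · intro j _; exact norm_nonneg _
            · intro j hj
              have hj1 : 1 ≤ j := (Finset.mem_Icc.mp hj).1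
              have hij : i₀ ≤ i + j := le_trans hi (by omega)
              obtain ⟨hg, hm, -⟩ := hi₀ _ hij
              rw [norm_div, hrdef]
              exact div_le_div₀ (by linarith) hg hb0 hm
        _ = r ^ k := by rw [Finset.prod_const, Nat.card_Icc]; norm_num
    have hμb : b ≤ ‖μ (i + (k + 1))‖ := (hi₀ _ (le_trans hi (by omega))).2.1
    have hinv : (‖μ (i + (k + 1))‖)⁻¹ ≤ b⁻¹ := inv_anti₀ hb0 hμb
    have hτb : ‖τ (i + (k + 1))‖ ≤ T := hT _ (by omega)
    have h1 : ‖(∏ j ∈ Finset.Icc 1 k, γ (i + j) / μ (i + j)) *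
        (μ (i + (k + 1)))⁻¹ * τ (i + (k + 1))‖
        = (∏ j ∈ Finset.Icc 1 k, ‖γ (i + j) / μ (i + j)‖) *
          (‖μ (i + (k + 1))‖)⁻¹ * ‖τ (i + (k + 1))‖ := by
      rw [norm_mul, norm_mul, norm_inv, norm_prod]
    rw [h1]
    have hT0 : 0 ≤ T := le_trans (norm_nonneg _) hτb
    calc (∏ j ∈ Finset.Icc 1 k, ‖γ (i + j) / μ (i + j)‖) *
          (‖μ (i + (k + 1))‖)⁻¹ * ‖τ (i + (k + 1))‖
        ≤ r ^ k * b⁻¹ * T := by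
          apply mul_le_mul _ hτb (norm_nonneg _)
          · positivity
          · exact mul_le_mul hprod hinv (by positivity) (by positivity)
      _ = r ^ k * (b⁻¹ * T) := by ring
  -- summability of the absolute values
  have hsummable : ∀ i, i₀ ≤ i → Summable fun k : ℕ =>
      ‖(∏ j ∈ Finset.Icc 1 (k + 1 - 1), γ (i + j) / μ (i + j)) *
        (μ (i + (k + 1)))⁻¹ * τ (i + (k + 1))‖ := by
    intro i hi
    refine Summable.of_nonneg_of_le (fun k => norm_nonneg _) (fun k => ?_)
      ((summable_geometric_of_lt_one hr0 hr1).mul_right (b⁻¹ * 1))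
    simpa using key 1 i hi (fun n hn => (hi₀ n (le_trans hi hn.le)).2.2) k
  -- summability of the terms themselves
  have hsumm : ∀ i, i₀ ≤ i → Summable fun k : ℕ =>
      (∏ j ∈ Finset.Icc 1 (k + 1 - 1), γ (i + j) / μ (i + j)) *
        (μ (i + (k + 1)))⁻¹ * τ (i + (k + 1)) := by
    intro i hi
    apply Summable.of_norm
    simpa using hsummable i hi
  refine ⟨i₀, ?_⟩
  intro term e
  refine ⟨hsummable, ?_, ?_⟩
  · -- e → 0
    rw [NormedAddCommGroup.tendsto_nhds_zero]
    intro ε hε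
    set T : ℝ := ε * (1 - r) * b / 2 with hTdef
    have hT0 : 0 < T := by
      apply div_pos _ two_pos
      apply mul_pos (mul_pos hε (by linarith)) hb0
    obtain ⟨i₁, hi₁⟩ := eventually_atTop.mp (habsτ.eventually_lt_const hT0)
    filter_upwards [eventually_ge_atTop (max i₀ i₁)] with i hi
    have hii₀ : i₀ ≤ i := le_trans (le_max_left _ _) hi
    have hii₁ : i₁ ≤ i := le_trans (le_max_right _ _) hi
    have hτT : ∀ n, i < n → ‖τ n‖ ≤ T :=
      fun n hn => (hi₁ n (le_trans hii₁ hn.le)).le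
    have hbound : ‖-∑' k : ℕ, (∏ j ∈ Finset.Icc 1 (k + 1 - 1), γ (i + j) / μ (i + j)) *
        (μ (i + (k + 1)))⁻¹ * τ (i + (k + 1))‖ ≤ (1 - r)⁻¹ * (b⁻¹ * T) := by
      rw [norm_neg]
      calc ‖∑' k : ℕ, (∏ j ∈ Finset.Icc 1 (k + 1 - 1), γ (i + j) / μ (i + j)) *
            (μ (i + (k + 1)))⁻¹ * τ (i + (k + 1))‖
          ≤ ∑' k : ℕ, ‖(∏ j ∈ Finset.Icc 1 (k + 1 - 1), γ (i + j) / μ (i + j)) *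
            (μ (i + (k + 1)))⁻¹ * τ (i + (k + 1))‖ := by
            apply norm_tsum_le_tsum_norm
            simpa using hsummable i hii₀
        _ ≤ ∑' k : ℕ, r ^ k * (b⁻¹ * T) := by
            apply Summable.tsum_le_tsum _ _ ((summable_geometric_of_lt_one hr0 hr1).mul_right _)
            · intro k
              simpa using key T i hii₀ hτT k
            · simpa using hsummable i hii₀
        _ = (1 - r)⁻¹ * (b⁻¹ * T) := by
            rw [tsum_mul_right, tsum_geometric_of_lt_one hr0 hr1]
    have heq : (1 - r)⁻¹ * (b⁻¹ * T) = ε / 2 := by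
      have h1r : (1 : ℝ) - r ≠ 0 := by linarith
      have hbne : b ≠ 0 := ne_of_gt hb0
      rw [hTdef]
      field_simp
    calc ‖-∑' k : ℕ, (∏ j ∈ Finset.Icc 1 (k + 1 - 1), γ (i + j) / μ (i + j)) *
          (μ (i + (k + 1)))⁻¹ * τ (i + (k + 1))‖
        ≤ (1 - r)⁻¹ * (b⁻¹ * T) := hbound
      _ = ε / 2 := heq
      _ < ε := by linarith
  · -- recursion
    intro i hi
    have hi1 : 1 ≤ i := by omega
    have hii₀ : i₀ ≤ i := hi.le
    have hi₀' : i₀ ≤ i - 1 := by omega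
    have hμi : μ i ≠ 0 := by
      intro h
      have := (hi₀ i hii₀).2.1
      rw [h] at this
      simp at this
      linarith
    -- shift identity
    have hshift : ∀ k : ℕ,
        (∏ j ∈ Finset.Icc 1 (k + 2 - 1), γ (i - 1 + j) / μ (i - 1 + j)) *
          (μ (i - 1 + (k + 2)))⁻¹ * τ (i - 1 + (k + 2))
        = (γ i / μ i) * ((∏ j ∈ Finset.Icc 1 (k + 1 - 1), γ (i + j) / μ (i + j)) *
          (μ (i + (k + 1)))⁻¹ * τ (i + (k + 1))) := by
      intro k
      have h1 : i - 1 + (k + 2) = i + (k + 1) := by omega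
      have hprodeq : ∏ j ∈ Finset.Icc 1 (k + 2 - 1), γ (i - 1 + j) / μ (i - 1 + j)
          = (γ i / μ i) * ∏ j ∈ Finset.Icc 1 (k + 1 - 1), γ (i + j) / μ (i + j) := by
        show ∏ j ∈ Finset.Icc 1 (k + 1), γ (i - 1 + j) / μ (i - 1 + j)
          = (γ i / μ i) * ∏ j ∈ Finset.Icc 1 k, γ (i + j) / μ (i + j)
        rw [prod_Icc_one_eq_range, prod_Icc_one_eq_range, Finset.prod_range_succ']
        have h0 : i - 1 + (0 + 1) = i := by omega
        rw [h0, mul_comm]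
        congr 1
        apply Finset.prod_congr rfl
        intro j _
        have : i - 1 + (j + 1 + 1) = i + (j + 1) := by omega
        rw [this]
      rw [h1, hprodeq]
      ring
    have hfirst : (∏ j ∈ Finset.Icc 1 (0 + 1 - 1), γ (i - 1 + j) / μ (i - 1 + j)) *
        (μ (i - 1 + (0 + 1)))⁻¹ * τ (i - 1 + (0 + 1)) = (μ i)⁻¹ * τ i := by
      have h1 : i - 1 + (0 + 1) = i := by omega
      simp [h1]
    -- split the tsum for e (i-1)
    have hsplit : ∑' k : ℕ, (∏ j ∈ Finset.Icc 1 (k + 1 - 1), γ (i - 1 + j) / μ (i - 1 + j)) *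
        (μ (i - 1 + (k + 1)))⁻¹ * τ (i - 1 + (k + 1))
        = (μ i)⁻¹ * τ i + (γ i / μ i) *
          ∑' k : ℕ, (∏ j ∈ Finset.Icc 1 (k + 1 - 1), γ (i + j) / μ (i + j)) *
            (μ (i + (k + 1)))⁻¹ * τ (i + (k + 1)) := by
      rw [Summable.tsum_eq_zero_add (hsumm (i - 1) hi₀')]
      rw [hfirst]
      congr 1
      calc ∑' k : ℕ, (∏ j ∈ Finset.Icc 1 (k + 1 + 1 - 1), γ (i - 1 + j) / μ (i - 1 + j)) *
            (μ (i - 1 + (k + 1 + 1)))⁻¹ * τ (i - 1 + (k + 1 + 1))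
          = ∑' k : ℕ, (γ i / μ i) * ((∏ j ∈ Finset.Icc 1 (k + 1 - 1), γ (i + j) / μ (i + j)) *
            (μ (i + (k + 1)))⁻¹ * τ (i + (k + 1))) := by
            apply tsum_congr
            intro k
            exact hshift k
        _ = (γ i / μ i) * ∑' k : ℕ, (∏ j ∈ Finset.Icc 1 (k + 1 - 1), γ (i + j) / μ (i + j)) *
            (μ (i + (k + 1)))⁻¹ * τ (i + (k + 1)) := tsum_mul_left
    show γ i * -∑' k : ℕ, ((∏ j ∈ Finset.Icc 1 (k + 1 - 1), γ (i + j) / μ (i + j)) *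
        (μ (i + (k + 1)))⁻¹ * τ (i + (k + 1))) -
      μ i * -∑' k : ℕ, ((∏ j ∈ Finset.Icc 1 (k + 1 - 1), γ (i - 1 + j) / μ (i - 1 + j)) *
        (μ (i - 1 + (k + 1)))⁻¹ * τ (i - 1 + (k + 1))) = τ i
    rw [hsplit]
    set S : ℂ := ∑' k : ℕ, (∏ j ∈ Finset.Icc 1 (k + 1 - 1), γ (i + j) / μ (i + j)) *
      (μ (i + (k + 1)))⁻¹ * τ (i + (k + 1)) with hS
    have hmul : μ i * ((μ i)⁻¹ * τ i + γ i / μ i * S) = τ i + γ i * S := by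
      field_simp
    rw [mul_neg, mul_neg, sub_neg_eq_add, hmul]
    ring
end

section
/- Let H be a complex inner product space, let λ ∈ (0,1), let S be a finite set of real numbers, and let (f_d)_{d∈S} be a family of pairwise orthogonal vectors in H. Then ‖Σ_{d∈S} λ^d f_d‖² ≤ ‖Σ_{d∈S} f_d‖ · ‖Σ_{d∈S} λ^{2d} f_d‖, and equality holds if and only if f_d = 0 for all but at most one d ∈ S. -/
open Finset in
lemma lagrange_aux (S : Finset ℝ) (a w : ℝ → ℝ) :
    (∑ i ∈ S, a i) * (∑ i ∈ S, (w i)^2 * a i) - (∑ i ∈ S, w i * a i)^2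
      = (∑ i ∈ S, ∑ j ∈ S, a i * a j * (w i - w j)^2) / 2 := by
  have key : ∑ i ∈ S, ∑ j ∈ S, a i * a j * (w i - w j)^2
      = ∑ i ∈ S, ∑ j ∈ S, (a i * ((w j)^2 * a j) + ((w i)^2 * a i) * a j
          - 2 * ((w i * a i) * (w j * a j))) := by
    refine Finset.sum_congr rfl fun i _ => Finset.sum_congr rfl fun j _ => by ring
  rw [key]
  simp only [Finset.sum_add_distrib, Finset.sum_sub_distrib, ← Finset.mul_sum,
    ← Finset.sum_mul, Finset.mul_sum]
  simp only [← Finset.sum_mul, ← Finset.mul_sum]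
  ring

open Finset in
lemma norm_sum_sq_orth {H : Type*} [NormedAddCommGroup H] [InnerProductSpace ℂ H]
    (S : Finset ℝ) (f : ℝ → H)
    (horth : ∀ d₁ ∈ S, ∀ d₂ ∈ S, d₁ ≠ d₂ → (inner ℂ (f d₁) (f d₂) : ℂ) = 0)
    (c : ℝ → ℝ) :
    ‖∑ d ∈ S, ((c d : ℝ) : ℂ) • f d‖ ^ 2 = ∑ d ∈ S, (c d)^2 * ‖f d‖^2 := by
  have h : (inner ℂ (∑ d ∈ S, ((c d : ℝ) : ℂ) • f d) (∑ d ∈ S, ((c d : ℝ) : ℂ) • f d) : ℂ)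
      = ∑ d ∈ S, (((c d)^2 : ℝ) : ℂ) * (inner ℂ (f d) (f d) : ℂ) := by
    rw [sum_inner]
    refine Finset.sum_congr rfl fun i hi => ?_
    rw [inner_sum, Finset.sum_eq_single_of_mem i hi]
    · rw [inner_smul_left, inner_smul_right, Complex.conj_ofReal]
      push_cast
      ring
    · intro j hj hji
      rw [inner_smul_left, inner_smul_right, horth i hi j hj (Ne.symm hji)]
      ring
  have h2 := inner_self_eq_norm_sq (𝕜 := ℂ) (∑ d ∈ S, ((c d : ℝ) : ℂ) • f d)
  rw [← h2, h, RCLike.re_to_complex, Complex.re_sum]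
  refine Finset.sum_congr rfl fun i _ => ?_
  rw [Complex.mul_re, Complex.ofReal_re, Complex.ofReal_im]
  have him : (inner ℂ (f i) (f i) : ℂ).im = 0 := by
    rw [← RCLike.im_to_complex]; exact inner_self_im (f i)
  have hre : (inner ℂ (f i) (f i) : ℂ).re = ‖f i‖ ^ 2 := by
    simpa using inner_self_eq_norm_sq (𝕜 := ℂ) (f i)
  rw [him, hre]
  ring

/-- Abstract core of Lemma 4.4: for pairwise orthogonal vectors `f d` (`d ∈ S`) in a
complex inner product space and `λ ∈ (0,1)`,
`‖∑ λ^d f_d‖² ≤ ‖∑ f_d‖ ⬝ ‖∑ λ^{2d} f_d‖`, with equality iff at most one `f_d` is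
nonzero. -/
theorem three_term_inequality {H : Type*} [NormedAddCommGroup H] [InnerProductSpace ℂ H]
    (lam : ℝ) (hlam0 : 0 < lam) (hlam1 : lam < 1)
    (S : Finset ℝ) (f : ℝ → H)
    (horth : ∀ d₁ ∈ S, ∀ d₂ ∈ S, d₁ ≠ d₂ → (inner ℂ (f d₁) (f d₂) : ℂ) = 0) :
    ‖∑ d ∈ S, ((lam ^ d : ℝ) : ℂ) • f d‖ ^ 2 ≤
        ‖∑ d ∈ S, f d‖ * ‖∑ d ∈ S, ((lam ^ (2 * d) : ℝ) : ℂ) • f d‖ ∧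
      (‖∑ d ∈ S, ((lam ^ d : ℝ) : ℂ) • f d‖ ^ 2 =
          ‖∑ d ∈ S, f d‖ * ‖∑ d ∈ S, ((lam ^ (2 * d) : ℝ) : ℂ) • f d‖ ↔
        ∀ d₁ ∈ S, ∀ d₂ ∈ S, f d₁ ≠ 0 → f d₂ ≠ 0 → d₁ = d₂) := by
  set a : ℝ → ℝ := fun d => ‖f d‖ ^ 2 with ha_def
  set w : ℝ → ℝ := fun d => lam ^ (2 * d) with hw_def
  have ha : ∀ d, 0 ≤ a d := fun d => sq_nonneg _
  have hwpos : ∀ d, 0 < w d := fun d => Real.rpow_pos_of_pos hlam0 _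
  have hwinj : ∀ x y : ℝ, w x = w y → x = y := by
    intro x y hxy
    by_contra hne
    rcases lt_or_gt_of_ne hne with h | h
    · have : w y < w x := by
        exact (Real.rpow_lt_rpow_left_iff_of_base_lt_one hlam0 hlam1).2 (by linarith)
      exact absurd hxy (ne_of_gt (hxy ▸ this)).symm
    · have : w x < w y := by
        exact (Real.rpow_lt_rpow_left_iff_of_base_lt_one hlam0 hlam1).2 (by linarith)
      exact absurd hxy (ne_of_lt this)
  -- the three norms squared
  have hsq : ∀ d, (lam ^ d) ^ 2 = w d := by
    intro d
    rw [hw_def]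
    simp only []
    rw [two_mul, Real.rpow_add hlam0]
    ring
  have hC : ‖∑ d ∈ S, ((lam ^ d : ℝ) : ℂ) • f d‖ ^ 2 = ∑ d ∈ S, w d * a d := by
    rw [norm_sum_sq_orth S f horth (fun d => lam ^ d)]
    exact Finset.sum_congr rfl fun d _ => by rw [hsq]
  have hA : ‖∑ d ∈ S, f d‖ ^ 2 = ∑ d ∈ S, a d := by
    have := norm_sum_sq_orth S f horth (fun _ => 1)
    simpa using this
  have hB : ‖∑ d ∈ S, ((lam ^ (2 * d) : ℝ) : ℂ) • f d‖ ^ 2 = ∑ d ∈ S, (w d) ^ 2 * a d :=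
    norm_sum_sq_orth S f horth w
  have hterm : ∀ i ∈ S, ∀ j ∈ S, 0 ≤ a i * a j * (w i - w j) ^ 2 := fun i _ j _ =>
    mul_nonneg (mul_nonneg (ha i) (ha j)) (sq_nonneg _)
  have hgap := lagrange_aux S a w
  have hDnonneg : 0 ≤ ∑ i ∈ S, ∑ j ∈ S, a i * a j * (w i - w j) ^ 2 :=
    Finset.sum_nonneg fun i hi => Finset.sum_nonneg fun j hj => hterm i hi j hj
  set C := ∑ d ∈ S, w d * a d with hC_def
  set A := ∑ d ∈ S, a d with hA_def
  set B := ∑ d ∈ S, (w d) ^ 2 * a d with hB_def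
  have hCS : C ^ 2 ≤ A * B := by linarith [hgap, hDnonneg]
  have hCnonneg : 0 ≤ C := hC ▸ sq_nonneg _
  have hN : (‖∑ d ∈ S, f d‖ * ‖∑ d ∈ S, ((lam ^ (2 * d) : ℝ) : ℂ) • f d‖) ^ 2 = A * B := by
    rw [mul_pow, hA, hB]
  have hNnonneg : 0 ≤ ‖∑ d ∈ S, f d‖ * ‖∑ d ∈ S, ((lam ^ (2 * d) : ℝ) : ℂ) • f d‖ :=
    mul_nonneg (norm_nonneg _) (norm_nonneg _)
  have hineq : ‖∑ d ∈ S, ((lam ^ d : ℝ) : ℂ) • f d‖ ^ 2 ≤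
      ‖∑ d ∈ S, f d‖ * ‖∑ d ∈ S, ((lam ^ (2 * d) : ℝ) : ℂ) • f d‖ := by
    rw [hC]
    have h2 : C ^ 2 ≤ (‖∑ d ∈ S, f d‖ * ‖∑ d ∈ S, ((lam ^ (2 * d) : ℝ) : ℂ) • f d‖) ^ 2 := by
      rw [hN]; exact hCS
    exact (abs_le_of_sq_le_sq' h2 hNnonneg).2
  refine ⟨hineq, ?_⟩
  constructor
  · -- equality → at most one nonzero
    intro heq d₁ hd₁ d₂ hd₂ hf₁ hf₂
    have hCN : C = ‖∑ d ∈ S, f d‖ * ‖∑ d ∈ S, ((lam ^ (2 * d) : ℝ) : ℂ) • f d‖ := by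
      rw [← hC, heq]
    have hCeq : C ^ 2 = A * B := by rw [hCN, hN]
    have hD0 : ∑ i ∈ S, ∑ j ∈ S, a i * a j * (w i - w j) ^ 2 = 0 := by
      linarith [hgap, hDnonneg, hCeq]
    have hall : ∀ i ∈ S, ∀ j ∈ S, a i * a j * (w i - w j) ^ 2 = 0 := by
      intro i hi j hj
      have h1 := (Finset.sum_eq_zero_iff_of_nonneg
        (fun i hi => Finset.sum_nonneg fun j hj => hterm i hi j hj)).1 hD0 i hi
      exact (Finset.sum_eq_zero_iff_of_nonneg (fun j hj => hterm i hi j hj)).1 h1 j hj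
    have h12 := hall d₁ hd₁ d₂ hd₂
    have ha₁ : 0 < a d₁ := pow_pos (norm_pos_iff.2 hf₁) 2
    have ha₂ : 0 < a d₂ := pow_pos (norm_pos_iff.2 hf₂) 2
    have : (w d₁ - w d₂) ^ 2 = 0 := by
      rcases mul_eq_zero.1 h12 with h | h
      · rcases mul_eq_zero.1 h with h' | h' <;> [exact absurd h' (ne_of_gt ha₁);
          exact absurd h' (ne_of_gt ha₂)]
      · exact h
    exact hwinj d₁ d₂ (by nlinarith [this])
  · -- at most one nonzero → equality
    intro hone
    have hall : ∀ i ∈ S, ∀ j ∈ S, a i * a j * (w i - w j) ^ 2 = 0 := by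
      intro i hi j hj
      by_cases hij : i = j
      · subst hij; simp
      · by_cases hfi : f i = 0
        · have : a i = 0 := by rw [ha_def]; simp [hfi]
          rw [this]; ring
        · have hfj : f j = 0 := by
            by_contra hfj
            exact hij (hone i hi j hj hfi hfj)
          have : a j = 0 := by rw [ha_def]; simp [hfj]
          rw [this]; ring
    have hD0 : ∑ i ∈ S, ∑ j ∈ S, a i * a j * (w i - w j) ^ 2 = 0 :=
      Finset.sum_eq_zero fun i hi => Finset.sum_eq_zero fun j hj => hall i hi j hj
    have hCeq : C ^ 2 = A * B := by
      rw [hD0] at hgap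
      linarith [hgap]
    rw [hC]
    have hsq2 : C ^ 2 = (‖∑ d ∈ S, f d‖ * ‖∑ d ∈ S, ((lam ^ (2 * d) : ℝ) : ℂ) • f d‖) ^ 2 := by
      rw [hN]; exact hCeq
    calc C = Real.sqrt (C ^ 2) := (Real.sqrt_sq hCnonneg).symm
      _ = Real.sqrt ((‖∑ d ∈ S, f d‖ * ‖∑ d ∈ S, ((lam ^ (2 * d) : ℝ) : ℂ) • f d‖) ^ 2) := by
          rw [hsq2]
      _ = _ := Real.sqrt_sq hNnonneg
end

section
/- Let X be a compact Hausdorff topological space with a countable basis, and let u : ℕ → X be a sequence with the following property: for every strictly increasing map φ : ℕ → ℕ and every y ∈ X, if u(φ(n)) converges to y as n → ∞ then u(φ(n)+1) also converges to y. Then the set L of subsequential limits of u (i.e. the set of y ∈ X such that u(φ(n)) → y for some strictly increasing φ : ℕ → ℕ) is nonempty, compact and connected. -/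
open Filter Topology

/-- Abstract core of Lemma 3.3: in a compact Hausdorff second-countable space, if a
sequence `u` has the property that whenever a subsequence `u ∘ φ` converges to `y`,
the shifted subsequence `n ↦ u (φ n + 1)` converges to `y` as well, then the set of
subsequential limits of `u` is nonempty, compact and connected. -/
theorem subsequential_limits_connected {X : Type*} [TopologicalSpace X] [CompactSpace X]
    [T2Space X] [SecondCountableTopology X] (u : ℕ → X)
    (h : ∀ φ : ℕ → ℕ, StrictMono φ → ∀ y : X,
      Tendsto (u ∘ φ) atTop (𝓝 y) → Tendsto (fun n => u (φ n + 1)) atTop (𝓝 y)) :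
    let L : Set X := {y | ∃ φ : ℕ → ℕ, StrictMono φ ∧ Tendsto (u ∘ φ) atTop (𝓝 y)}
    L.Nonempty ∧ IsCompact L ∧ IsConnected L := by
  intro L
  have hLeq : L = {y | MapClusterPt y atTop u} := by
    ext y
    constructor
    · rintro ⟨φ, hφ, hlim⟩
      exact hlim.mapClusterPt.of_comp hφ.tendsto_atTop
    · intro hy
      obtain ⟨ψ, hψ, hl⟩ := TopologicalSpace.FirstCountableTopology.tendsto_subseq hy
      exact ⟨ψ, hψ, hl⟩
  have hLclosed : IsClosed L := by rw [hLeq]; exact isClosed_setOf_clusterPt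
  have hLcomp : IsCompact L := hLclosed.isCompact
  have hLne : L.Nonempty := by
    obtain ⟨a, φ, hφ, hl⟩ := CompactSpace.tendsto_subseq u
    exact ⟨a, φ, hφ, hl⟩
  -- the sequence eventually enters any open neighborhood of L
  have key : ∀ W : Set X, IsOpen W → L ⊆ W → ∀ᶠ n in atTop, u n ∈ W := by
    intro W hW hLW
    by_contra hc
    rw [not_eventually] at hc
    have hfr : ∃ᶠ n in atTop, u n ∈ Wᶜ := hc.mono fun n hn => hn
    obtain ⟨a, ha, φ, hφ, hlim⟩ := hW.isClosed_compl.isCompact.tendsto_subseq' hfr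
    exact ha (hLW ⟨φ, hφ, hlim⟩)
  refine ⟨hLne, hLcomp, hLne, ?_⟩
  rintro U V hU hV hLUV ⟨a, haL, haU⟩ ⟨b, hbL, hbV⟩
  by_contra hE
  rw [Set.not_nonempty_iff_eq_empty] at hE
  -- L ∩ U and L ∩ V are disjoint compact sets
  have hAeq : L ∩ U = L ∩ Vᶜ := by
    ext x
    constructor
    · rintro ⟨hxL, hxU⟩
      refine ⟨hxL, fun hxV => ?_⟩
      exact Set.eq_empty_iff_forall_notMem.mp hE x ⟨hxL, hxU, hxV⟩
    · rintro ⟨hxL, hxV⟩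
      exact ⟨hxL, (hLUV hxL).resolve_right hxV⟩
  have hBeq : L ∩ V = L ∩ Uᶜ := by
    ext x
    constructor
    · rintro ⟨hxL, hxV⟩
      refine ⟨hxL, fun hxU => ?_⟩
      exact Set.eq_empty_iff_forall_notMem.mp hE x ⟨hxL, hxU, hxV⟩
    · rintro ⟨hxL, hxU⟩
      exact ⟨hxL, (hLUV hxL).resolve_left hxU⟩
  have hAcomp : IsCompact (L ∩ U) := by
    rw [hAeq]; exact (hLclosed.inter hV.isClosed_compl).isCompact
  have hBcomp : IsCompact (L ∩ V) := by
    rw [hBeq]; exact (hLclosed.inter hU.isClosed_compl).isCompact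
  have hdisj : Disjoint (L ∩ U) (L ∩ V) := by
    rw [hBeq, Set.disjoint_iff]
    rintro x ⟨⟨_, hxU⟩, _, hxU'⟩
    exact hxU' hxU
  obtain ⟨U', V', hU', hV', hAU', hBV', hUV'⟩ :=
    SeparatedNhds.of_isCompact_isCompact hAcomp hBcomp hdisj
  have hLsub : L ⊆ U' ∪ V' := by
    intro x hxL
    rcases hLUV hxL with hx | hx
    · exact Or.inl (hAU' ⟨hxL, hx⟩)
    · exact Or.inr (hBV' ⟨hxL, hx⟩)
  obtain ⟨N, hN⟩ := (atTop_basis.eventually_iff.mp (key _ (hU'.union hV') hLsub))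
  have hN' : ∀ n, N ≤ n → u n ∈ U' ∪ V' := fun n hn => hN.2 hn
  -- frequently in U' and frequently in V'
  have haU' : a ∈ U' := hAU' ⟨haL, haU⟩
  have hbV' : b ∈ V' := hBV' ⟨hbL, hbV⟩
  have hfreqU : ∃ᶠ n in atTop, u n ∈ U' := by
    obtain ⟨φ, hφ, hlim⟩ := haL
    exact hφ.tendsto_atTop.frequently
      ((hlim.eventually (hU'.mem_nhds haU')).frequently)
  have hfreqV : ∃ᶠ n in atTop, u n ∈ V' := by
    obtain ⟨φ, hφ, hlim⟩ := hbL
    exact hφ.tendsto_atTop.frequently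
      ((hlim.eventually (hV'.mem_nhds hbV')).frequently)
  -- crossing: frequently u n ∈ U' and u (n+1) ∈ V'
  have hcross : ∀ N₀ : ℕ, ∃ n > N₀, u n ∈ U' ∧ u (n + 1) ∈ V' := by
    intro N₀
    obtain ⟨m, hm, hmU⟩ := (frequently_atTop.mp hfreqU) (max (N₀ + 1) N)
    obtain ⟨k, hk, hkV⟩ := (frequently_atTop.mp hfreqV) (m + 1)
    have hQ : ∃ j, m < j ∧ u j ∉ U' := by
      refine ⟨k, hk, fun hkU => ?_⟩
      exact (Set.disjoint_iff.mp hUV' ⟨hkU, hkV⟩)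
    classical
    let j := Nat.find hQ
    have hj : m < j ∧ u j ∉ U' := Nat.find_spec hQ
    have hjm : m < j := hj.1
    have hmN₀ : N₀ < m := lt_of_lt_of_le (Nat.lt_succ_self N₀) (le_trans (le_max_left _ _) hm)
    have hmN : N ≤ m := le_trans (le_max_right _ _) hm
    refine ⟨j - 1, ?_, ?_, ?_⟩
    · omega
    · -- u (j-1) ∈ U'
      rcases Nat.lt_or_ge m (j - 1) with hlt | hge
      · by_contra hnot
        have : ¬ (m < j - 1 ∧ u (j - 1) ∉ U') := Nat.find_min hQ (by omega)
        exact this ⟨hlt, hnot⟩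
      · have : j - 1 = m := by omega
        rw [this]; exact hmU
    · have hj1 : j - 1 + 1 = j := by omega
      rw [hj1]
      rcases hN' j (by omega) with hjU | hjV
      · exact absurd hjU hj.2
      · exact hjV
  obtain ⟨φ, hφ, hφP⟩ := Nat.exists_strictMono_subsequence hcross
  have hφU : ∀ n, u (φ n) ∈ U' := fun n => (hφP n).1
  have hφV : ∀ n, u (φ n + 1) ∈ V' := fun n => (hφP n).2
  obtain ⟨y, ψ, hψ, hlim⟩ := CompactSpace.tendsto_subseq (u ∘ φ)
  have hlim' : Tendsto (u ∘ (φ ∘ ψ)) atTop (𝓝 y) := hlim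
  have hyL : y ∈ L := ⟨φ ∘ ψ, hφ.comp hψ, hlim'⟩
  have hyclU : y ∈ closure U' :=
    mem_closure_of_tendsto hlim' (Eventually.of_forall fun n => hφU (ψ n))
  have hynotV : y ∉ V' := fun hyV =>
    Set.disjoint_iff.mp (hUV'.closure_left hV') ⟨hyclU, hyV⟩
  have hyU : y ∈ U' := (hLsub hyL).resolve_right hynotV
  have hshift := h (φ ∘ ψ) (hφ.comp hψ) y hlim'
  have hyclV : y ∈ closure V' :=
    mem_closure_of_tendsto hshift (Eventually.of_forall fun n => hφV (ψ n))
  exact Set.disjoint_iff.mp (hUV'.symm.closure_left hU') ⟨hyclV, hyU⟩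
end
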